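/- For every b > 0, the set E_b = ∪_{n=1}^∞ E_{b,n} is of first Baire category (meagre) in the metric space (F, d). -/

import Mathlib

/-!
The sets `{u | |u|_b² ≤ r}`, with `|u|_b²` tested on finite partial sums, are closed in `(F, d)`
because every Fourier coefficient is continuous for `d`. They have empty interior: subtracting
from `u` the shear mode of frequency `j` and amplitude `a (κ₀ j)⁻ᴺ` moves `u` by at most
`O(a) + 2⁻ᴺ` in `d`, since only the first `N` seminorms matter up to `2⁻ᴺ`, while it raises
`|u|_b²` by about `a² e^{2b log² j} j^{-2N}`, which is unbounded in `j`. Hence `E_b = ⋃ₙ E_{b,n}`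
is a countable union of nowhere dense sets.
-/

noncomputable section

abbrev Vc : Type := EuclideanSpace ℂ (Fin 2)

/-- Euclidean norm of a lattice point `k ∈ ℤ²`. -/
def knorm (k : ℤ × ℤ) : ℝ := Real.sqrt ((k.1 : ℝ) ^ 2 + (k.2 : ℝ) ^ 2)

/-- The reality condition `û(-k) = conj (û(k))`. -/
def IsRealCond (u : ℤ × ℤ → Vc) : Prop :=
  ∀ k : ℤ × ℤ, ∀ i : Fin 2, u (-k) i = starRingEnd ℂ (u k i)

/-- Divergence-free condition `k ⬝ û(k) = 0`. -/
def DivFree (u : ℤ × ℤ → Vc) : Prop :=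
  ∀ k : ℤ × ℤ, (k.1 : ℂ) * u k 0 + (k.2 : ℂ) * u k 1 = 0

/-- Membership in the Fourier model of the phase space `H`. -/
def InH (u : ℤ × ℤ → Vc) : Prop := u 0 = 0 ∧ IsRealCond u ∧ DivFree u

/-- `|A^{α/2} u|²  =  L² Σ_{k≠0} (κ₀|k|)^{2α} |û(k)|²` for natural `α`. -/
def sqA (L κ₀ : ℝ) (u : ℤ × ℤ → Vc) (α : ℕ) : ℝ :=
  L ^ 2 * ∑' k : ℤ × ℤ, (κ₀ * knorm k) ^ (2 * α) * ‖u k‖ ^ 2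

/-- Finiteness of `|A^{α/2}u|` for natural `α`. -/
def SummableA (κ₀ : ℝ) (u : ℤ × ℤ → Vc) (α : ℕ) : Prop :=
  Summable fun k : ℤ × ℤ => (κ₀ * knorm k) ^ (2 * α) * ‖u k‖ ^ 2

/-- The class `C(σ)`. -/
def InC (L κ₀ ν σ : ℝ) (u : ℤ × ℤ → Vc) : Prop :=
  (∀ α : ℕ, SummableA κ₀ u α) ∧
  ∃ c₀ : ℝ, ∀ α : ℕ,
    sqA L κ₀ u α ≤ c₀ * Real.exp (σ * (α : ℝ) ^ 2) * ν ^ 2 * κ₀ ^ (2 * α)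

/-- The summand of `|u|_b²`. -/
def ebTerm (b : ℝ) (u : ℤ × ℤ → Vc) (k : ℤ × ℤ) : ℝ :=
  Real.exp (2 * b * (Real.log (knorm k + Real.exp 1)) ^ 2) * ‖u k‖ ^ 2

/-- `|u|_b² = L² Σ_{k≠0} e^{2b(ln(|k|+e))²} |û(k)|²`. -/
def ebSq (L b : ℝ) (u : ℤ × ℤ → Vc) : ℝ := L ^ 2 * ∑' k : ℤ × ℤ, ebTerm b u k

/-- The Fourier model of `F = C^∞ ∩ H`: elements of `H` with `|A^{α/2}u| < ∞`
for every `α ∈ ℕ`. -/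
def Fs (L κ₀ : ℝ) : Type := {u : ℤ × ℤ → Vc // InH u ∧ ∀ α : ℕ, SummableA κ₀ u α}

/-- `|A^{α/2} w| = (L² Σ_{k≠0} (κ₀|k|)^{2α} |ŵ(k)|²)^{1/2}`. -/
def nA (L κ₀ : ℝ) (w : ℤ × ℤ → Vc) (α : ℕ) : ℝ := Real.sqrt (sqA L κ₀ w α)

/-- The Fréchet metric
`d(u,v) = Σ_{α=1}^∞ 2^{-α} |A^{α/2}(u-v)| / (1 + |A^{α/2}(u-v)|)`. -/
def dF (L κ₀ : ℝ) (u v : Fs L κ₀) : ℝ :=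
  ∑' α : ℕ, (1 / 2 ^ (α + 1)) *
    (nA L κ₀ (fun k => u.1 k - v.1 k) (α + 1) /
      (1 + nA L κ₀ (fun k => u.1 k - v.1 k) (α + 1)))

/-- The topology on `(F, d)` generated by the open balls of the metric `d`. -/
noncomputable instance topF (L κ₀ : ℝ) : TopologicalSpace (Fs L κ₀) :=
  TopologicalSpace.generateFrom
    {B | ∃ x : Fs L κ₀, ∃ r : ℝ, B = {y : Fs L κ₀ | dF L κ₀ x y < r}}

/-- The set `E_{b,n} = {u ∈ E_b : |u|_b ≤ n}`, viewed as a subset of `F`. -/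
def EbnSet (L κ₀ b : ℝ) (n : ℕ) : Set (Fs L κ₀) :=
  {u : Fs L κ₀ | Summable (ebTerm b u.1) ∧
    Real.sqrt (L ^ 2 * ∑' k : ℤ × ℤ, ebTerm b u.1 k) ≤ n}


open Real Filter Topology

section WeightedL2

variable {ι E : Type*} [SeminormedAddCommGroup E] {c : ι → ℝ} {a b : ι → E}

theorem summable_mul_norm_add_sq_and_sqrt_tsum_le (hc : ∀ i, 0 ≤ c i)
    (ha : Summable fun i => c i * ‖a i‖ ^ 2) (hb : Summable fun i => c i * ‖b i‖ ^ 2) :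
    (Summable fun i => c i * ‖a i + b i‖ ^ 2) ∧
      √(∑' i, c i * ‖a i + b i‖ ^ 2) ≤
        √(∑' i, c i * ‖a i‖ ^ 2) + √(∑' i, c i * ‖b i‖ ^ 2) := by
  have hsq : ∀ f : ι → ℝ, (fun i => (√(c i) * f i) ^ (2 : ℝ)) = fun i => c i * f i ^ 2 := by
    intro f
    funext i
    rw [rpow_two, mul_pow, sq_sqrt (hc i)]
  obtain ⟨hsum, hle⟩ := Lp_add_le_tsum_of_nonneg one_le_two
    (fun i => mul_nonneg (sqrt_nonneg (c i)) (norm_nonneg (a i)))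
    (fun i => mul_nonneg (sqrt_nonneg (c i)) (norm_nonneg (b i)))
    ((hsq _).symm ▸ ha) ((hsq _).symm ▸ hb)
  simp only [← mul_add, hsq, ← sqrt_eq_rpow] at hsum hle
  have hdom : ∀ i, c i * ‖a i + b i‖ ^ 2 ≤ c i * (‖a i‖ + ‖b i‖) ^ 2 := fun i =>
    mul_le_mul_of_nonneg_left (pow_le_pow_left₀ (norm_nonneg _) (norm_add_le _ _) 2) (hc i)
  have hsum' : Summable fun i => c i * ‖a i + b i‖ ^ 2 :=
    hsum.of_nonneg_of_le (fun i => mul_nonneg (hc i) (sq_nonneg _)) hdom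
  exact ⟨hsum', (sqrt_le_sqrt (hsum'.tsum_le_tsum hdom hsum)).trans hle⟩

end WeightedL2

theorem knorm_pos {k : ℤ × ℤ} (hk : k ≠ 0) : 0 < knorm k := by
  obtain ⟨k₁, k₂⟩ := k
  have : (k₁ : ℝ) ≠ 0 ∨ (k₂ : ℝ) ≠ 0 := by
    by_contra! h
    exact hk (by simp_all)
  rw [knorm, sqrt_pos]
  rcases this with h | h <;> positivity

theorem knorm_natCast_zero (j : ℕ) : knorm ((j : ℤ), 0) = j := by
  simp [knorm]

theorem InH.sub {u w : ℤ × ℤ → Vc} (hu : InH u) (hw : InH w) : InH (u - w) := by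
  obtain ⟨hu₀, hu_real, hu_div⟩ := hu
  obtain ⟨hw₀, hw_real, hw_div⟩ := hw
  refine ⟨by simp [hu₀, hw₀], fun k i => ?_, fun k => ?_⟩
  · simp [hu_real k i, hw_real k i]
  · simp only [Pi.sub_apply, PiLp.sub_apply]
    linear_combination hu_div k - hw_div k

section SummableA

variable {κ₀ : ℝ} {u w : ℤ × ℤ → Vc} {α : ℕ}

theorem SummableA.add (hu : SummableA κ₀ u α) (hw : SummableA κ₀ w α) :
    SummableA κ₀ (u + w) α :=
  (summable_mul_norm_add_sq_and_sqrt_tsum_le (fun _ => (even_two_mul α).pow_nonneg _) hu hw).1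

theorem SummableA.neg (hu : SummableA κ₀ u α) : SummableA κ₀ (-u) α := by
  simpa [SummableA] using hu

theorem SummableA.sub (hu : SummableA κ₀ u α) (hw : SummableA κ₀ w α) :
    SummableA κ₀ (u - w) α := by
  simpa [sub_eq_add_neg] using hu.add hw.neg

theorem tendsto_pow_mul_norm_coeff_atTop (hκ : 0 ≤ κ₀) (hu : SummableA κ₀ u α) :
    Tendsto (fun j : ℕ => (κ₀ * j) ^ α * ‖u ((j : ℤ), 0)‖) atTop (𝓝 0) := by
  have hinj : Function.Injective fun j : ℕ => ((j : ℤ), (0 : ℤ)) := fun i j h => by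
    simpa using h
  have h := ((hu.tendsto_cofinite_zero.comp hinj.tendsto_cofinite).comp
    Nat.cofinite_eq_atTop.ge).sqrt
  rw [sqrt_zero] at h
  refine h.congr fun j => ?_
  simp only [Function.comp_apply, knorm_natCast_zero]
  rw [pow_mul', ← mul_pow, sqrt_sq (by positivity)]

end SummableA

section nA

variable {L κ₀ : ℝ} {u w : ℤ × ℤ → Vc} {α : ℕ}

theorem nA_nonneg (L κ₀ : ℝ) (w : ℤ × ℤ → Vc) (α : ℕ) : 0 ≤ nA L κ₀ w α := sqrt_nonneg _

theorem nA_eq_abs_mul_sqrt (L κ₀ : ℝ) (w : ℤ × ℤ → Vc) (α : ℕ) :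
    nA L κ₀ w α = |L| * √(∑' k, (κ₀ * knorm k) ^ (2 * α) * ‖w k‖ ^ 2) := by
  rw [nA, sqA, sqrt_mul (sq_nonneg L), sqrt_sq_eq_abs]

theorem nA_add_le (hu : SummableA κ₀ u α) (hw : SummableA κ₀ w α) :
    nA L κ₀ (u + w) α ≤ nA L κ₀ u α + nA L κ₀ w α := by
  simp only [nA_eq_abs_mul_sqrt, ← mul_add]
  gcongr
  exact (summable_mul_norm_add_sq_and_sqrt_tsum_le (fun _ => (even_two_mul α).pow_nonneg _) hu hw).2

theorem mul_norm_le_nA (hL : 0 ≤ L) (hκ : 0 ≤ κ₀) (hw : SummableA κ₀ w α) (k : ℤ × ℤ) :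
    L * (κ₀ * knorm k) ^ α * ‖w k‖ ≤ nA L κ₀ w α := by
  have hterm : (κ₀ * knorm k) ^ (2 * α) * ‖w k‖ ^ 2 ≤
      ∑' j, (κ₀ * knorm j) ^ (2 * α) * ‖w j‖ ^ 2 :=
    hw.le_tsum k fun j _ => mul_nonneg ((even_two_mul α).pow_nonneg _) (sq_nonneg _)
  have hk : 0 ≤ κ₀ * knorm k := mul_nonneg hκ (sqrt_nonneg _)
  have hsum : 0 ≤ ∑' j, (κ₀ * knorm j) ^ (2 * α) * ‖w j‖ ^ 2 :=
    tsum_nonneg fun j => mul_nonneg ((even_two_mul α).pow_nonneg _) (sq_nonneg _)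
  rw [nA, sqA, le_sqrt (by positivity) (by positivity)]
  calc (L * (κ₀ * knorm k) ^ α * ‖w k‖) ^ 2
      = L ^ 2 * ((κ₀ * knorm k) ^ (2 * α) * ‖w k‖ ^ 2) := by ring
    _ ≤ _ := mul_le_mul_of_nonneg_left hterm (sq_nonneg L)

end nA

section FrechetSum

variable {s t : ℝ}

theorem div_one_add_self_le_one (ht : 0 ≤ t) : t / (1 + t) ≤ 1 :=
  (div_le_one (by positivity)).2 (by linarith)

theorem div_one_add_self_le_self (ht : 0 ≤ t) : t / (1 + t) ≤ t :=
  div_le_self ht (by linarith)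

theorem div_one_add_self_le_div_one_add_self (hs : 0 ≤ s) (h : s ≤ t) :
    s / (1 + s) ≤ t / (1 + t) := by
  rw [div_le_div_iff₀ (by linarith) (by linarith)]
  linarith

theorem add_div_one_add_add_le (hs : 0 ≤ s) (ht : 0 ≤ t) :
    (s + t) / (1 + (s + t)) ≤ s / (1 + s) + t / (1 + t) := by
  rw [div_add_div _ _ (by positivity) (by positivity), div_le_div_iff₀ (by positivity)
    (by positivity)]
  nlinarith [mul_nonneg hs ht, mul_nonneg (mul_nonneg hs ht) (add_nonneg hs ht)]

variable {a a₁ a₂ : ℕ → ℝ}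

theorem frechet_term_le (ha : ∀ n, 0 ≤ a n) (n : ℕ) :
    1 / 2 ^ (n + 1) * (a n / (1 + a n)) ≤ 1 / 2 / 2 ^ n := by
  rw [pow_succ', ← div_div]
  exact mul_le_of_le_one_right (by positivity) (div_one_add_self_le_one (ha n))

theorem summable_frechet (ha : ∀ n, 0 ≤ a n) :
    Summable fun n : ℕ => 1 / 2 ^ (n + 1) * (a n / (1 + a n)) :=
  (summable_geometric_two' 1).of_nonneg_of_le
    (fun n => by have := ha n; positivity) (frechet_term_le ha)

theorem frechet_tsum_le_add (ha₁ : ∀ n, 0 ≤ a₁ n) (ha₂ : ∀ n, 0 ≤ a₂ n) (ha : ∀ n, 0 ≤ a n)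
    (h : ∀ n, a n ≤ a₁ n + a₂ n) :
    ∑' n : ℕ, 1 / 2 ^ (n + 1) * (a n / (1 + a n)) ≤
      ∑' n : ℕ, 1 / 2 ^ (n + 1) * (a₁ n / (1 + a₁ n)) +
        ∑' n : ℕ, 1 / 2 ^ (n + 1) * (a₂ n / (1 + a₂ n)) := by
  rw [← (summable_frechet ha₁).tsum_add (summable_frechet ha₂)]
  refine (summable_frechet ha).tsum_le_tsum (fun n => ?_)
    ((summable_frechet ha₁).add (summable_frechet ha₂))
  rw [← mul_add]
  exact mul_le_mul_of_nonneg_left ((div_one_add_self_le_div_one_add_self (ha n) (h n)).trans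
    (add_div_one_add_add_le (ha₁ n) (ha₂ n))) (by positivity)

theorem frechet_head_le_tsum (ha : ∀ n, 0 ≤ a n) :
    1 / 2 * (a 0 / (1 + a 0)) ≤ ∑' n : ℕ, 1 / 2 ^ (n + 1) * (a n / (1 + a n)) := by
  simpa using (summable_frechet ha).le_tsum 0 fun n _ => by have := ha n; positivity

theorem frechet_tsum_le_of_le (ha : ∀ n, 0 ≤ a n) {ε : ℝ} (hε : 0 ≤ ε) {N : ℕ}
    (h : ∀ n < N, a n ≤ ε) :
    ∑' n : ℕ, 1 / 2 ^ (n + 1) * (a n / (1 + a n)) ≤ ε + (1 / 2) ^ N := by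
  rw [← (summable_frechet ha).sum_add_tsum_nat_add N]
  gcongr
  · calc ∑ n ∈ Finset.range N, 1 / 2 ^ (n + 1) * (a n / (1 + a n))
        ≤ ∑ n ∈ Finset.range N, ε / 2 / 2 ^ n := by
          refine Finset.sum_le_sum fun n hn => ?_
          rw [show ε / 2 / 2 ^ n = 1 / 2 ^ (n + 1) * ε by ring]
          gcongr
          exact (div_one_add_self_le_self (ha n)).trans (h n (Finset.mem_range.1 hn))
      _ ≤ ∑' n : ℕ, ε / 2 / 2 ^ n :=
          (summable_geometric_two' ε).sum_le_tsum _ fun n _ => by positivity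
      _ = ε := tsum_geometric_two' ε
  · calc ∑' n : ℕ, 1 / 2 ^ (n + N + 1) * (a (n + N) / (1 + a (n + N)))
        ≤ ∑' n : ℕ, (1 / 2) ^ N / 2 / 2 ^ n :=
          ((summable_nat_add_iff N).2 (summable_frechet ha)).tsum_le_tsum
            (fun n => (frechet_term_le ha (n + N)).trans_eq <| by
              rw [one_div_pow]
              field_simp
              ring)
            (summable_geometric_two' _)
      _ = (1 / 2) ^ N := tsum_geometric_two' _

end FrechetSum

section Topology

variable {L κ₀ : ℝ}

theorem dF_triangle (x y z : Fs L κ₀) : dF L κ₀ x z ≤ dF L κ₀ x y + dF L κ₀ y z := by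
  refine frechet_tsum_le_add (fun _ => nA_nonneg ..) (fun _ => nA_nonneg ..)
    (fun _ => nA_nonneg ..) fun n => ?_
  have h := nA_add_le (L := L) ((x.2.2 (n + 1)).sub (y.2.2 (n + 1)))
    ((y.2.2 (n + 1)).sub (z.2.2 (n + 1)))
  rwa [sub_add_sub_cancel] at h

theorem dF_self (x : Fs L κ₀) : dF L κ₀ x x = 0 := by
  simp [dF, nA, sqA]

theorem nA_sub_lt_of_dF_lt {x y : Fs L κ₀} {s : ℝ} (hs : 0 ≤ s)
    (h : dF L κ₀ x y < 1 / 2 * (s / (1 + s))) : nA L κ₀ (x.1 - y.1) 1 < s := by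
  by_contra! hle
  have hhead : 1 / 2 * (nA L κ₀ (x.1 - y.1) 1 / (1 + nA L κ₀ (x.1 - y.1) 1)) ≤ dF L κ₀ x y :=
    frechet_head_le_tsum fun n => nA_nonneg L κ₀ (x.1 - y.1) (n + 1)
  have := div_one_add_self_le_div_one_add_self hs hle
  linarith

theorem isOpen_dF_ball (x : Fs L κ₀) (r : ℝ) : IsOpen {y | dF L κ₀ x y < r} :=
  TopologicalSpace.GenerateOpen.basic _ ⟨x, r, rfl⟩

theorem exists_dF_ball_subset {U : Set (Fs L κ₀)} (hU : IsOpen U) {x : Fs L κ₀} (hx : x ∈ U) :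
    ∃ r > 0, {y | dF L κ₀ x y < r} ⊆ U := by
  induction hU generalizing x with
  | basic B hB =>
    obtain ⟨z, r, rfl⟩ := hB
    refine ⟨r - dF L κ₀ z x, sub_pos.2 hx, fun y hy => ?_⟩
    have : dF L κ₀ x y < r - dF L κ₀ z x := hy
    show dF L κ₀ z y < r
    linarith [dF_triangle z x y]
  | univ => exact ⟨1, one_pos, Set.subset_univ _⟩
  | inter s t _ _ ihs iht =>
    obtain ⟨r₁, hr₁, hs⟩ := ihs hx.1
    obtain ⟨r₂, hr₂, ht⟩ := iht hx.2
    refine ⟨min r₁ r₂, lt_min hr₁ hr₂, fun y (hy : dF L κ₀ x y < min r₁ r₂) => ⟨hs ?_, ht ?_⟩⟩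
    · exact hy.trans_le (min_le_left _ _)
    · exact hy.trans_le (min_le_right _ _)
  | sUnion S _ ih =>
    obtain ⟨s, hsS, hxs⟩ := hx
    obtain ⟨r, hr, hsub⟩ := ih s hsS hxs
    exact ⟨r, hr, hsub.trans (Set.subset_sUnion_of_mem hsS)⟩

theorem nhds_basis_dF_ball (x : Fs L κ₀) :
    (𝓝 x).HasBasis (fun r : ℝ => 0 < r) fun r => {y | dF L κ₀ x y < r} := by
  refine ⟨fun t => ⟨fun ht => ?_, fun ⟨r, hr, hsub⟩ => ?_⟩⟩
  · obtain ⟨U, hUt, hU, hxU⟩ := mem_nhds_iff.1 ht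
    obtain ⟨r, hr, hsub⟩ := exists_dF_ball_subset hU hxU
    exact ⟨r, hr, hsub.trans hUt⟩
  · refine Filter.mem_of_superset ((isOpen_dF_ball x r).mem_nhds ?_) hsub
    simpa [dF_self] using hr

theorem continuous_coeff (hL : 0 < L) (hκ : 0 < κ₀) (k : ℤ × ℤ) :
    Continuous fun u : Fs L κ₀ => u.1 k := by
  rcases eq_or_ne k 0 with rfl | hk
  · simp only [fun u : Fs L κ₀ => u.2.1.1, continuous_const]
  refine continuous_iff_continuousAt.2 fun x => ?_
  have hK : 0 < L * (κ₀ * knorm k) := by have := knorm_pos hk; positivity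
  refine ((nhds_basis_dF_ball x).tendsto_iff Metric.nhds_basis_ball).2 fun ε hε => ?_
  set s := L * (κ₀ * knorm k) * ε
  refine ⟨1 / 2 * (s / (1 + s)), by positivity, fun y hy => ?_⟩
  have hlt := nA_sub_lt_of_dF_lt (by positivity) hy
  have hle := mul_norm_le_nA hL.le hκ.le ((x.2.2 1).sub (y.2.2 1)) k
  rw [pow_one] at hle
  rw [Metric.mem_ball, dist_eq_norm, norm_sub_rev]
  exact lt_of_mul_lt_mul_left (hle.trans_lt hlt) hK.le

end Topology

/-- `|u|_b² ≤ r`, tested on finite partial sums so that no summability is presupposed. -/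
def ebSublevel (L κ₀ b r : ℝ) : Set (Fs L κ₀) :=
  {u | ∀ S : Finset (ℤ × ℤ), L ^ 2 * ∑ k ∈ S, ebTerm b u.1 k ≤ r}

theorem ebTerm_nonneg (b : ℝ) (u : ℤ × ℤ → Vc) (k : ℤ × ℤ) : 0 ≤ ebTerm b u k := by
  unfold ebTerm
  positivity

theorem isClosed_ebSublevel {L κ₀ : ℝ} (hL : 0 < L) (hκ : 0 < κ₀) (b r : ℝ) :
    IsClosed (ebSublevel L κ₀ b r) := by
  simp only [ebSublevel, Set.ofPred_forall]
  refine isClosed_iInter fun S => isClosed_le ?_ continuous_const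
  refine continuous_const.mul (continuous_finsetSum S fun k _ => ?_)
  exact continuous_const.mul ((continuous_coeff hL hκ k).norm.pow 2)

theorem EbnSet_subset_ebSublevel (L κ₀ b : ℝ) (n : ℕ) :
    EbnSet L κ₀ b n ⊆ ebSublevel L κ₀ b (n ^ 2) := by
  rintro u ⟨hsum, hle⟩ S
  rw [sqrt_le_left (Nat.cast_nonneg n)] at hle
  refine le_trans ?_ hle
  gcongr
  exact hsum.sum_le_tsum S fun k _ => ebTerm_nonneg b u.1 k

theorem setOf_summable_ebTerm_subset_iUnion_EbnSet (L κ₀ b : ℝ) :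
    {u : Fs L κ₀ | Summable (ebTerm b u.1)} ⊆ ⋃ n : ℕ, EbnSet L κ₀ b n := by
  intro u hu
  obtain ⟨n, hn⟩ := exists_nat_ge (√(L ^ 2 * ∑' k, ebTerm b u.1 k))
  exact Set.mem_iUnion.2 ⟨n, hu, hn⟩

theorem tendsto_exp_mul_log_sq_div_pow_atTop {b : ℝ} (hb : 0 < b) (N : ℕ) :
    Tendsto (fun x : ℝ => exp (b * log (x + exp 1) ^ 2) / x ^ N) atTop atTop := by
  have hlog : Tendsto (fun x : ℝ => log (x + exp 1)) atTop atTop :=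
    tendsto_log_atTop.comp (tendsto_atTop_add_const_right _ _ tendsto_id)
  have hquad : Tendsto (fun t : ℝ => t * (b * t - N)) atTop atTop :=
    tendsto_id.atTop_mul_atTop₀
      (tendsto_atTop_add_const_right _ _ (tendsto_id.const_mul_atTop hb))
  -- `x ^ N ≤ exp (N t)` for `t = log (x + e)`, so the quotient dominates `exp (t (b t - N))`.
  refine tendsto_atTop_mono' _ ?_ (tendsto_exp_atTop.comp (hquad.comp hlog))
  filter_upwards [eventually_gt_atTop 0] with x hx
  have hmono : log x ≤ log (x + exp 1) := log_le_log hx (by linarith [exp_pos 1])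
  rw [Function.comp_apply, Function.comp_apply, le_div_iff₀ (by positivity),
    ← exp_log (pow_pos hx N), ← exp_add, exp_le_exp, log_pow]
  nlinarith [(Nat.cast_nonneg N : (0 : ℝ) ≤ N)]

section ShearMode

/-- The Fourier coefficients of the shear flow `2c cos(κ₀ j x₁) e₂`. -/
def shearMode (j : ℕ) (c : ℝ) : ℤ × ℤ → Vc :=
  fun k => if k.1.natAbs = j ∧ k.2 = 0 then EuclideanSpace.single 1 (c : ℂ) else 0

variable {j : ℕ} {c : ℝ}

theorem shearMode_inH (hj : j ≠ 0) : InH (shearMode j c) := by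
  refine ⟨by simp [shearMode, Ne.symm hj], fun k i => ?_, fun k => ?_⟩
  · simp only [shearMode, Prod.fst_neg, Prod.snd_neg, Int.natAbs_neg, neg_eq_zero]
    split_ifs <;> fin_cases i <;> simp
  · simp only [shearMode]
    split_ifs with h
    · simp [h.2]
    · simp

theorem shearMode_eq_zero {k : ℤ × ℤ}
    (hk : k ∉ ({((j : ℤ), 0), (-(j : ℤ), 0)} : Finset (ℤ × ℤ))) : shearMode j c k = 0 := by
  obtain ⟨k₁, k₂⟩ := k
  simp only [Finset.mem_insert, Finset.mem_singleton, Prod.mk.injEq] at hk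
  simp only [shearMode, Int.natAbs_eq_iff, ite_eq_right_iff]
  tauto

theorem summableA_shearMode (κ₀ : ℝ) (α : ℕ) : SummableA κ₀ (shearMode j c) α :=
  summable_of_ne_finset_zero (s := {((j : ℤ), 0), (-(j : ℤ), 0)}) fun k hk => by
    rw [shearMode_eq_zero hk, norm_zero, zero_pow two_ne_zero, mul_zero]

theorem sqA_shearMode (hj : j ≠ 0) (L κ₀ : ℝ) (α : ℕ) :
    sqA L κ₀ (shearMode j c) α = 2 * L ^ 2 * (κ₀ * j) ^ (2 * α) * c ^ 2 := by
  have hne : ((j : ℤ), (0 : ℤ)) ≠ (-(j : ℤ), 0) := by simp [hj]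
  rw [sqA, tsum_eq_sum fun k hk => by
    rw [shearMode_eq_zero hk, norm_zero, zero_pow two_ne_zero, mul_zero], Finset.sum_pair hne]
  simp [shearMode, knorm]
  ring

end ShearMode

section Perturbation

variable {L κ₀ : ℝ}

def Fs.subShearMode (x : Fs L κ₀) {j : ℕ} (hj : j ≠ 0) (c : ℝ) : Fs L κ₀ :=
  ⟨x.1 - shearMode j c, x.2.1.sub (shearMode_inH hj),
    fun α => (x.2.2 α).sub (summableA_shearMode κ₀ α)⟩

theorem dF_subShearMode_le (x : Fs L κ₀) {j : ℕ} (hj : j ≠ 0) {c ε : ℝ} (hε : 0 ≤ ε) {N : ℕ}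
    (hκj : 1 ≤ κ₀ * j) (h : 2 * L ^ 2 * (κ₀ * j) ^ (2 * N) * c ^ 2 ≤ ε ^ 2) :
    dF L κ₀ x (x.subShearMode hj c) ≤ ε + (1 / 2) ^ N := by
  refine frechet_tsum_le_of_le (fun n => nA_nonneg ..) hε fun n hn => ?_
  show nA L κ₀ (x.1 - (x.1 - shearMode j c)) (n + 1) ≤ ε
  rw [sub_sub_cancel, nA, sqA_shearMode hj, sqrt_le_left hε]
  refine le_trans ?_ h
  gcongr
  omega

theorem ebTerm_sub_shearMode_ge (b : ℝ) (u : ℤ × ℤ → Vc) (j : ℕ) {c : ℝ} (hc : 0 ≤ c)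
    (hu : ‖u ((j : ℤ), 0)‖ ≤ c / 2) :
    exp (2 * b * log (j + exp 1) ^ 2) * (c / 2) ^ 2 ≤
      ebTerm b (u - shearMode j c) ((j : ℤ), 0) := by
  have hmode : shearMode j c ((j : ℤ), 0) = EuclideanSpace.single 1 (c : ℂ) := by
    simp [shearMode]
  have hnorm : c / 2 ≤ ‖u ((j : ℤ), 0) - shearMode j c ((j : ℤ), 0)‖ := by
    have := norm_sub_norm_le (shearMode j c ((j : ℤ), 0)) (u ((j : ℤ), 0))
    rw [hmode, PiLp.norm_single, Complex.norm_real, norm_of_nonneg hc,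
      norm_sub_rev] at this
    rw [hmode]
    linarith
  rw [ebTerm, knorm_natCast_zero, Pi.sub_apply]
  gcongr

theorem subShearMode_notMem_ebSublevel (x : Fs L κ₀) {j : ℕ} (hj : j ≠ 0) {b c r : ℝ}
    (hc : 0 ≤ c) (hcoeff : ‖x.1 ((j : ℤ), 0)‖ ≤ c / 2)
    (hr : r < L ^ 2 * (exp (2 * b * log (j + exp 1) ^ 2) * (c / 2) ^ 2)) :
    x.subShearMode hj c ∉ ebSublevel L κ₀ b r := by
  intro hy
  have hS := hy {((j : ℤ), 0)}
  rw [Finset.sum_singleton] at hS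
  have := mul_le_mul_of_nonneg_left (ebTerm_sub_shearMode_ge b x.1 j hc hcoeff) (sq_nonneg L)
  exact (hr.trans_le this).not_ge hS

theorem exists_dF_lt_notMem_ebSublevel (hL : 0 < L) (hκ : 0 < κ₀) {b : ℝ} (hb : 0 < b)
    (x : Fs L κ₀) {δ : ℝ} (hδ : 0 < δ) (r : ℝ) :
    ∃ y, dF L κ₀ x y < δ ∧ y ∉ ebSublevel L κ₀ b r := by
  obtain ⟨N, hN⟩ : ∃ N : ℕ, (1 / 2 : ℝ) ^ N < δ / 2 :=
    exists_pow_lt_of_lt_one (by linarith) (by norm_num)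
  set a := δ / (8 * L)
  have hLa : L * a = δ / 8 := by simp only [a]; field_simp
  have hj₁ : ∀ᶠ j : ℕ in atTop, 1 ≤ κ₀ * j :=
    (tendsto_natCast_atTop_atTop.const_mul_atTop hκ).eventually_ge_atTop 1
  have hj₂ : ∀ᶠ j : ℕ in atTop, (κ₀ * j) ^ N * ‖x.1 ((j : ℤ), 0)‖ < a / 2 :=
    (tendsto_order.1 (tendsto_pow_mul_norm_coeff_atTop hκ.le (x.2.2 N))).2 _ (by positivity)
  have hj₃ : ∀ᶠ j : ℕ in atTop,
      r < L ^ 2 * a ^ 2 / (4 * κ₀ ^ (2 * N)) *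
        (exp (2 * b * log (j + exp 1) ^ 2) / (j : ℝ) ^ (2 * N)) :=
    (((tendsto_exp_mul_log_sq_div_pow_atTop (by positivity) _).comp
      tendsto_natCast_atTop_atTop).const_mul_atTop (by positivity)).eventually_gt_atTop r
  obtain ⟨j, hκj, hsmall, hlarge⟩ := (hj₁.and (hj₂.and hj₃)).exists
  have hj : j ≠ 0 := by rintro rfl; simp at hκj; linarith
  set c := a / (κ₀ * j) ^ N
  have hc : (κ₀ * j) ^ N * c = a := mul_div_cancel₀ a (pow_pos (by linarith) N).ne'
  refine ⟨x.subShearMode hj c, ?_, ?_⟩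
  · have hdist := dF_subShearMode_le x hj (c := c) (ε := δ / 4) (by positivity) (N := N) hκj (by
      rw [show 2 * L ^ 2 * (κ₀ * j) ^ (2 * N) * c ^ 2 = 2 * (L * ((κ₀ * j) ^ N * c)) ^ 2 by
        ring, hc, hLa]
      nlinarith)
    linarith
  · have hcoeff : ‖x.1 ((j : ℤ), 0)‖ ≤ c / 2 :=
      le_of_mul_le_mul_left (a := (κ₀ * j) ^ N) (by linarith) (pow_pos (by linarith) N)
    refine subShearMode_notMem_ebSublevel x hj (by positivity) hcoeff (hlarge.trans_eq ?_)
    rw [← hc]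
    field_simp
    ring

theorem interior_ebSublevel (hL : 0 < L) (hκ : 0 < κ₀) {b : ℝ} (hb : 0 < b) (r : ℝ) :
    interior (ebSublevel L κ₀ b r) = ∅ := by
  refine Set.eq_empty_of_forall_notMem fun x hx => ?_
  obtain ⟨δ, hδ, hball⟩ := (nhds_basis_dF_ball x).mem_iff.1 (mem_interior_iff_mem_nhds.1 hx)
  obtain ⟨y, hxy, hy⟩ := exists_dF_lt_notMem_ebSublevel hL hκ hb x hδ r
  exact hy (hball hxy)

end Perturbation

/-- For every `b > 0`, the set `E_b = ∪_{n≥1} E_{b,n}` is of first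
Baire category (meagre) in the metric space `(F, d)`. -/
theorem Eb_meagre (L κ₀ : ℝ) (hL : 0 < L) (hκ₀ : κ₀ = 2 * Real.pi / L)
    (b : ℝ) (hb : 0 < b) :
    IsMeagre {u : Fs L κ₀ | Summable (ebTerm b u.1)} := by
  have hκ : 0 < κ₀ := hκ₀ ▸ by positivity
  refine (isMeagre_iUnion fun n => ?_).mono (setOf_summable_ebTerm_subset_iUnion_EbnSet L κ₀ b)
  refine IsNowhereDense.isMeagre (.mono (EbnSet_subset_ebSublevel L κ₀ b n) ?_)
  exact (isClosed_ebSublevel hL hκ b _).isNowhereDense_iff.2 (interior_ebSublevel hL hκ hb _)
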